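/- Let p be a prime with p > 250 and let m = min{k ∈ ℤ_{>0} : k ∤ p+1}. Then m ≤ ⌊√(2p/5)⌋. -/

import Mathlib

/-!
If `m > n := ⌊√(2p/5)⌋`, then `n - 2`, `n - 1`, `n` all divide `p + 1`. Any two of three
consecutive integers have gcd dividing `2`, so their product divides `2(p + 1)`. But
`2p < 5(n + 1)²`, and the cubic `(n - 2)(n - 1)n` outgrows `5(n + 1)² + 2` once `n ≥ 10`,
which `p > 250` guarantees.
-/

theorem Nat.mul_succ_mul_succ_succ_dvd_two_mul {k N : ℕ} (h₀ : k ∣ N) (h₁ : k + 1 ∣ N)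
    (h₂ : k + 2 ∣ N) : k * ((k + 1) * (k + 2)) ∣ 2 * N := by
  have hgcd : Nat.gcd k ((k + 1) * (k + 2)) ∣ 2 := by
    have hk₁ : Nat.Coprime k (k + 1) := Nat.coprime_self_add_right.mpr (Nat.coprime_one_right k)
    have hk₂ : Nat.gcd k (k + 2) ∣ 2 := by
      rw [add_comm, Nat.gcd_add_self_right]
      exact Nat.gcd_dvd_right k 2
    calc Nat.gcd k ((k + 1) * (k + 2))
        ∣ Nat.gcd k (k + 1) * Nat.gcd k (k + 2) := gcd_mul_dvd_mul_gcd k _ _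
      _ = Nat.gcd k (k + 2) := by rw [hk₁.gcd_eq_one, one_mul]
      _ ∣ 2 := hk₂
  have hcop : Nat.Coprime (k + 1) (k + 2) :=
    Nat.coprime_self_add_right.mpr (Nat.coprime_one_right (k + 1))
  have hlcm : Nat.lcm k ((k + 1) * (k + 2)) ∣ N :=
    Nat.lcm_dvd h₀ (hcop.mul_dvd_of_dvd_of_dvd h₁ h₂)
  rw [← Nat.gcd_mul_lcm]
  exact mul_dvd_mul hgcd hlcm

theorem Real.lt_floor_sqrt_add_one_sq (x : ℝ) : x < (⌊√x⌋₊ + 1) ^ 2 :=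
  (Real.sqrt_lt' (by positivity)).mp (Nat.lt_floor_add_one _)

theorem stmt_3_general (p m : ℕ) (hge : 250 < p)
    (hm : IsLeast {k : ℕ | 0 < k ∧ ¬ k ∣ p + 1} m) :
    m ≤ ⌊Real.sqrt (2 * p / 5)⌋₊ := by
  set n := ⌊Real.sqrt (2 * p / 5)⌋₊ with hn
  by_contra! hnm
  have hdvd : ∀ k, 0 < k → k ≤ n → k ∣ p + 1 := fun k hk hkn =>
    by_contra fun hndvd => (hm.2 ⟨hk, hndvd⟩).not_gt (hkn.trans_lt hnm)
  have hp : (251 : ℝ) ≤ p := by exact_mod_cast hge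
  have hn10 : 10 ≤ n := Nat.le_floor <| Real.le_sqrt_of_sq_le (by norm_num; linarith)
  have hpn : 2 * p < 5 * (n + 1) ^ 2 := by
    have := Real.lt_floor_sqrt_add_one_sq (2 * p / 5)
    rw [← hn] at this
    exact_mod_cast (by linarith : (2 * p : ℝ) < 5 * (n + 1) ^ 2)
  clear_value n
  obtain ⟨k, rfl⟩ : ∃ k, n = k + 2 := ⟨n - 2, by omega⟩
  have hprod : k * ((k + 1) * (k + 2)) ≤ 2 * (p + 1) :=
    Nat.le_of_dvd (by omega) <| Nat.mul_succ_mul_succ_succ_dvd_two_mul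
      (hdvd k (by omega) (by omega)) (hdvd (k + 1) (by omega) (by omega)) (hdvd _ (by omega) le_rfl)
  nlinarith

theorem stmt_3 (p m : ℕ) (hp : p.Prime) (hge : 250 < p)
    (hm : IsLeast {k : ℕ | 0 < k ∧ ¬ k ∣ p + 1} m) :
    m ≤ ⌊Real.sqrt (2 * p / 5)⌋₊ :=
  stmt_3_general p m hge hm
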